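/- arXiv:2112.13952 — 2 statements merged into one kernel-verified Lean document; each statement's English description precedes it below -/
import Mathlib

section
/- Let r be a real number with 0 < r < d. The following are equivalent: (1) A ∈ W_{(n−d+r)/(d−r)}(d, n−d); (2) there exist R > 0, a sequence t_i → ∞ and nonzero vectors v_i ∈ ℤ^n such that ‖b_{d·t_i} g_A v_i‖ ≤ R e^{−r t_i} for all i; (3) there exist C > 0, a sequence t_i → ∞ and nonzero vectors v_i ∈ ℤ^n such that sup_{ω∈Ω} ‖g_{t_i} ω g_A v_i‖ ≤ C e^{(d−r−1)t_i} for all i. -/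
open Matrix MeasureTheory Filter Topology

noncomputable section

abbrev SLn (n : ℕ) := Matrix.SpecialLinearGroup (Fin n) ℝ

instance SLn.topologicalSpace (n : ℕ) : TopologicalSpace (SLn n) :=
  TopologicalSpace.induced (fun g => (g : Matrix (Fin n) (Fin n) ℝ)) inferInstance

/-- The diagonal flow `g_t = diag(e^{(n-1)t}, e^{-t}, …, e^{-t})`. -/
def gtFlow (n : ℕ) (hn : 0 < n) (t : ℝ) : SLn n :=
  ⟨Matrix.diagonal (fun i => if (i : ℕ) = 0 then Real.exp ((n - 1 : ℝ) * t) else Real.exp (-t)),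
    by
      rcases Nat.exists_eq_succ_of_ne_zero hn.ne' with ⟨m, rfl⟩
      rw [Matrix.det_diagonal, Fin.prod_univ_succ]
      have h1 : ∀ i : Fin m,
          (if ((i.succ : Fin (m+1)) : ℕ) = 0 then Real.exp (((m.succ : ℝ) - 1) * t)
            else Real.exp (-t)) = Real.exp (-t) := by
        intro i; simp [Fin.val_succ]
      rw [Finset.prod_congr rfl (fun i _ => h1 i)]
      simp only [Fin.val_zero, if_true, Finset.prod_const, Finset.card_univ,
        Fintype.card_fin, if_true]
      rw [← Real.exp_nat_mul, ← Real.exp_add]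
      have h2 : ((m.succ : ℝ) - 1) * t + (m : ℝ) * -t = 0 := by push_cast; ring
      rw [h2, Real.exp_zero]⟩

/-- The unipotent element `u(v)` whose first row is `(1, v)`. -/
def uv (n : ℕ) (v : Fin (n - 1) → ℝ) : SLn n :=
  ⟨Matrix.of fun i j =>
      if i = j then 1
      else if hij : (i : ℕ) = 0 ∧ (j : ℕ) ≠ 0 then v ⟨(j : ℕ) - 1, by have := j.isLt; omega⟩
      else 0,
    by
      have h := Matrix.det_of_upperTriangular (M := Matrix.of fun i j : Fin n =>
        if i = j then (1:ℝ)
        else if hij : (i : ℕ) = 0 ∧ (j : ℕ) ≠ 0 then v ⟨(j : ℕ) - 1, by have := j.isLt; omega⟩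
        else 0) ?_
      · rw [h]; simp
      · intro i j hji
        have hij : ¬ i = j := by exact fun h => absurd h (by exact Fin.ne_of_gt hji)
        have : ¬ ((i : ℕ) = 0 ∧ (j : ℕ) ≠ 0) := by
          rintro ⟨hi, -⟩
          have : (j : ℕ) < (i : ℕ) := hji
          omega
        simp [hij, this]⟩

/-- The block matrix `(I_d  A ; 0  I_{n-d})` as an element of `SL_n(ℝ)`. -/
def gA (n d : ℕ) (A : Matrix (Fin d) (Fin (n - d)) ℝ) : SLn n :=
  ⟨Matrix.of fun i j =>
      if i = j then 1
      else if hij : (i : ℕ) < d ∧ d ≤ (j : ℕ) then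
        A ⟨i, hij.1⟩ ⟨(j : ℕ) - d, by have := j.isLt; omega⟩
      else 0,
    by
      have h := Matrix.det_of_upperTriangular (M := Matrix.of fun i j : Fin n =>
        if i = j then (1:ℝ)
        else if hij : (i : ℕ) < d ∧ d ≤ (j : ℕ) then
          A ⟨i, hij.1⟩ ⟨(j : ℕ) - d, by have := j.isLt; omega⟩
        else 0) ?_
      · rw [h]; simp
      · intro i j hji
        have hij : ¬ i = j := Fin.ne_of_gt hji
        have hlt : (j : ℕ) < (i : ℕ) := hji
        have : ¬ ((i : ℕ) < d ∧ d ≤ (j : ℕ)) := by omega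
        simp [hij, this]⟩

/-- The flow `b_t = diag(e^{((n-d)/d)t} I_d, e^{-t} I_{n-d})`. -/
def btFlow (n d : ℕ) (hd : 0 < d) (hdn : d ≤ n) (t : ℝ) : SLn n :=
  ⟨Matrix.diagonal (fun i =>
      if (i : ℕ) < d then Real.exp (((n : ℝ) - d) / d * t) else Real.exp (-t)),
    by
      rw [Matrix.det_diagonal]
      have key : ∀ i : Fin n,
          (if (i : ℕ) < d then Real.exp (((n : ℝ) - d) / d * t) else Real.exp (-t))
            = Real.exp (if (i : ℕ) < d then ((n : ℝ) - d) / d * t else -t) := by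
        intro i; split <;> rfl
      rw [Finset.prod_congr rfl (fun i _ => key i), ← Real.exp_sum]
      have hsum : (∑ i : Fin n, if (i : ℕ) < d then ((n : ℝ) - d) / d * t else -t) = 0 := by
        rw [Fin.sum_univ_eq_sum_range (fun i => if i < d then ((n : ℝ) - d) / d * t else -t) n]
        rw [Finset.range_eq_Ico, ← Finset.sum_Ico_consecutive _ (Nat.zero_le d) hdn]
        rw [Finset.sum_congr rfl (fun i hi => if_pos (Finset.mem_Ico.mp hi).2),
          Finset.sum_congr rfl (g := fun _ => -t)
            (fun i hi => if_neg (by have := (Finset.mem_Ico.mp hi).1; omega))]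
        simp only [Finset.sum_const, Nat.card_Ico, nsmul_eq_mul, Nat.sub_zero]
        have hd' : (d : ℝ) ≠ 0 := Nat.cast_ne_zero.mpr hd.ne'
        have hnd : ((n - d : ℕ) : ℝ) = (n : ℝ) - d := by
          push_cast [Nat.cast_sub hdn]; ring
        rw [hnd]
        field_simp
        ring
      rw [hsum, Real.exp_zero]⟩

/-- The vector `(1, x) ∈ ℝ^d` obtained by prepending `1` to `x ∈ ℝ^{d-1}`. -/
def tildeVec (d : ℕ) (x : Fin (d - 1) → ℝ) : Fin d → ℝ :=
  fun i => if h : (i : ℕ) = 0 then 1 else x ⟨(i : ℕ) - 1, by have := i.isLt; omega⟩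

/-- The affine subspace `L_A = {(x, (1,x)A) : x ∈ ℝ^{d-1}}` of `ℝ^{n-1}`. -/
def LAset (n d : ℕ) (hd : 2 ≤ d) (hdn : d ≤ n - 1) (A : Matrix (Fin d) (Fin (n - d)) ℝ) :
    Set (Fin (n - 1) → ℝ) :=
  {y | ∃ x : Fin (d - 1) → ℝ, y = fun j : Fin (n - 1) =>
    if h : (j : ℕ) < d - 1 then x ⟨(j : ℕ), h⟩
    else ∑ i : Fin d, tildeVec d x i * A i ⟨(j : ℕ) - (d - 1), by have := j.isLt; omega⟩}

/-- `A ∈ W_r(ι, κ)`: there is `C > 0` such that `‖Aq + p‖ ≤ C‖q‖^{-r}` has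
infinitely many integer solutions. -/
def MemW (r : ℝ) {ι κ : Type*} [Fintype ι] [Fintype κ] (A : Matrix ι κ ℝ) : Prop :=
  ∃ C : ℝ, 0 < C ∧ {pq : (ι → ℤ) × (κ → ℤ) |
    ‖A.mulVec (fun j => ((pq.2 j : ℝ))) + (fun i => ((pq.1 i : ℝ)))‖
      ≤ C * ‖(fun j => ((pq.2 j : ℝ)) : κ → ℝ)‖ ^ (-r)}.Infinite

/-- `A ∈ W'_r(ι, κ)`: for every `C > 0` the inequality `‖Aq + p‖ ≤ C‖q‖^{-r}` has
a nonzero integer solution. -/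
def MemW' (r : ℝ) {ι κ : Type*} [Fintype ι] [Fintype κ] (A : Matrix ι κ ℝ) : Prop :=
  ∀ C : ℝ, 0 < C → ∃ pq : (ι → ℤ) × (κ → ℤ), pq ≠ 0 ∧
    ‖A.mulVec (fun j => ((pq.2 j : ℝ))) + (fun i => ((pq.1 i : ℝ)))‖
      ≤ C * ‖(fun j => ((pq.2 j : ℝ)) : κ → ℝ)‖ ^ (-r)

/-- `Γ = SL_n(ℤ)` as a subgroup of `SL_n(ℝ)`. -/
def Gamma (n : ℕ) : Subgroup (SLn n) :=
  (Matrix.SpecialLinearGroup.map (n := Fin n) (Int.castRingHom ℝ)).range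

/-- The homogeneous space `X = SL_n(ℝ)/SL_n(ℤ)`. -/
abbrev XSpace (n : ℕ) := SLn n ⧸ Gamma n

instance (n : ℕ) : MeasurableSpace (XSpace n) := borel _

/-- The column indices `1 ≤ i < j ≤ n-2` of the matrix `A^ext`. -/
abbrev PairIdx (n : ℕ) := {p : Fin (n - 2) × Fin (n - 2) // p.1 < p.2}

/-- The matrix `A^ext` associated to a `2 × (n-2)` matrix `A`. -/
def Aext (n : ℕ) (A : Matrix (Fin 2) (Fin (n - 2)) ℝ) :
    Matrix (Fin (n - 2) ⊕ (Fin (n - 2) ⊕ Unit)) (PairIdx n) ℝ :=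
  Matrix.of fun row col =>
    match row with
    | Sum.inl k =>
        if k = col.1.1 then -(A 0 col.1.2) else if k = col.1.2 then A 0 col.1.1 else 0
    | Sum.inr (Sum.inl k) =>
        if k = col.1.1 then -(A 1 col.1.2) else if k = col.1.2 then A 1 col.1.1 else 0
    | Sum.inr (Sum.inr _) => A 0 col.1.2 * A 1 col.1.1 - A 0 col.1.1 * A 1 col.1.2

/-- Inclusion of `SL_n(ℤ)` into `SL_n(ℝ)`. -/
def SLmapZ (n : ℕ) : Matrix.SpecialLinearGroup (Fin n) ℤ →* SLn n :=
  Matrix.SpecialLinearGroup.map (Int.castRingHom ℝ)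

/-- Index of the standard basis of `⋀^k ℝ^N`: subsets of `Fin N` of cardinality `k`. -/
abbrev WIdx (N k : ℕ) := {s : Finset (Fin N) // s.card = k}

/-- Identification of `ι → ℝ` with the Euclidean space indexed by `ι`. -/
def toEuc {ι : Type*} [Fintype ι] (f : ι → ℝ) : EuclideanSpace ℝ ι :=
  (WithLp.equiv 2 (ι → ℝ)).symm f

/-- The Plücker coordinates of the wedge `w₁ ∧ ⋯ ∧ w_k` of vectors in `ℝ^N`. -/
def wedgeCoords (N k : ℕ) (w : Fin k → (Fin N → ℝ)) : WIdx N k → ℝ :=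
  fun S => (Matrix.of fun a b : Fin k => w a ((S.1.orderIsoOfFin S.2 b : Fin N))).det

/-- The wedge `w₁ ∧ ⋯ ∧ w_k` as an element of the Euclidean space `⋀^k ℝ^N`. -/
def wedgeE (N k : ℕ) (w : Fin k → (Fin N → ℝ)) : EuclideanSpace ℝ (WIdx N k) :=
  toEuc (wedgeCoords N k w)

/-- The `k`-th compound matrix, giving the action of a matrix on `⋀^k ℝ^N`
in Plücker coordinates. -/
def compound (N k : ℕ) (M : Matrix (Fin N) (Fin N) ℝ) : Matrix (WIdx N k) (WIdx N k) ℝ :=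
  Matrix.of fun S T =>
    (Matrix.of fun a b : Fin k =>
      M ((S.1.orderIsoOfFin S.2 a : Fin N)) ((T.1.orderIsoOfFin T.2 b : Fin N))).det

/-- Action of `g ∈ SL_n(ℝ)` on `⋀^k ℝ^N` in Plücker coordinates. -/
def wedgeAction (N k : ℕ) (M : Matrix (Fin N) (Fin N) ℝ) (w : EuclideanSpace ℝ (WIdx N k)) :
    EuclideanSpace ℝ (WIdx N k) :=
  toEuc ((compound N k M).mulVec (WithLp.equiv 2 _ w))

/-- The parabolic subgroup `P_j ⊆ SL_n(ℝ)` (block lower triangular with an upper-left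
`j × j` block), as a set. -/
def Pblock (n j : ℕ) : Set (SLn n) :=
  {g | ∀ s t : Fin n, (s : ℕ) < j → j ≤ (t : ℕ) → (g : Matrix (Fin n) (Fin n) ℝ) s t = 0}

/-- A vector `y ∈ ℝ^{n-1}` is Dirichlet-improvable. -/
def DirichletImprovable (n : ℕ) (y : Fin (n - 1) → ℝ) : Prop :=
  ∃ δ : ℝ, 0 < δ ∧ δ < 1 ∧ ∃ T₀ : ℝ, ∀ T : ℝ, T₀ ≤ T →
    ∃ (p : Fin (n - 1) → ℤ) (q : ℤ), q ≠ 0 ∧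
      ‖(fun i => (q : ℝ) * y i + (p i : ℝ) : Fin (n - 1) → ℝ)‖ ≤ δ / T ∧
      |(q : ℝ)| ≤ T ^ (n - 1)

/-- Flattening of an `n × n` matrix into a vector in `ℝ^{n·n}`. -/
def flatten (n : ℕ) (M : Matrix (Fin n) (Fin n) ℝ) : Fin (n * n) → ℝ :=
  fun idx => M (finProdFinEquiv.symm idx).1 (finProdFinEquiv.symm idx).2

/-- The adjoint action `Ad(g) : x ↦ g x g⁻¹` of `g ∈ SL_n(ℝ)` written as an
`(n·n) × (n·n)` matrix in the flattened coordinates. -/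
def AdMatrix (n : ℕ) (g : SLn n) : Matrix (Fin (n * n)) (Fin (n * n)) ℝ :=
  Matrix.of fun r c =>
    (g : Matrix (Fin n) (Fin n) ℝ) (finProdFinEquiv.symm r).1 (finProdFinEquiv.symm c).1 *
    ((g⁻¹ : SLn n) : Matrix (Fin n) (Fin n) ℝ) (finProdFinEquiv.symm c).2 (finProdFinEquiv.symm r).2

/-!
Write an integer vector as `v = (p, q) ∈ ℤ^d × ℤ^(n-d)`, so that `g_A v = (Aq + p, q)` and
`b_{dt} g_A v = (e^{(n-d)t} (Aq + p), e^{-dt} q)`. Condition (2) therefore says that along times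
`t_i → ∞` there are nonzero `(p, q)` with `‖Aq + p‖ ≲ e^{-(n-d+r)t}` and `‖q‖ ≲ e^{(d-r)t}`.
Eliminating `t` gives `‖Aq + p‖ ≲ ‖q‖^{-(n-d+r)/(d-r)}`, i.e. (1); conversely the solutions in (1)
have unbounded `‖q‖`, and `e^{(d-r)t} = ‖q‖` defines the times.

For (3), each `ω ∈ Ω` has first row `(w_ω, 0)`, so the first coordinate of `g_t ω g_A v` is
`e^{(n-1)t} ⟨w_ω, Aq + p⟩` while the others are `e^{-t}` times coordinates of `ω g_A v`. As `Ω` is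
compact and the `w_ω` span `ℝ^d`, bounding all of these for every `ω ∈ Ω` is equivalent, up to
constants, to the two bounds of (2).
-/

section Blocks

variable {n d : ℕ} {R : Type*}

def finBlockEquiv (hdn : d ≤ n) : Fin d ⊕ Fin (n - d) ≃ Fin n :=
  finSumFinEquiv.trans (finCongr (Nat.add_sub_cancel' hdn))

@[simp]
lemma finBlockEquiv_inl (hdn : d ≤ n) (i : Fin d) :
    finBlockEquiv hdn (Sum.inl i) = Fin.castLE hdn i :=
  Fin.ext (by simp [finBlockEquiv])

@[simp]
lemma finBlockEquiv_inr (hdn : d ≤ n) (j : Fin (n - d)) :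
    finBlockEquiv hdn (Sum.inr j) = ⟨d + j, by omega⟩ :=
  Fin.ext (by simp [finBlockEquiv])

def blockHead (hdn : d ≤ n) (x : Fin n → R) : Fin d → R := fun i => x (Fin.castLE hdn i)

def blockTail (d : ℕ) (x : Fin n → R) : Fin (n - d) → R := fun j => x ⟨d + j, by omega⟩

def blockEquiv (hdn : d ≤ n) : (Fin n → R) ≃ (Fin d → R) × (Fin (n - d) → R) where
  toFun x := (blockHead hdn x, blockTail d x)
  invFun pq k := Sum.elim pq.1 pq.2 ((finBlockEquiv hdn).symm k)
  left_inv x := by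
    funext k
    obtain ⟨s | s, rfl⟩ := (finBlockEquiv hdn).surjective k <;>
      simp only [Equiv.symm_apply_apply] <;> simp [blockHead, blockTail]
  right_inv pq := by
    ext i
    · simp only [blockHead, ← finBlockEquiv_inl hdn, Equiv.symm_apply_apply, Sum.elim_inl]
    · simp only [blockTail, ← finBlockEquiv_inr hdn, Equiv.symm_apply_apply, Sum.elim_inr]

lemma sum_eq_sum_blockHead_add_sum_blockTail [AddCommMonoid R] (hdn : d ≤ n) (x : Fin n → R) :
    ∑ k, x k = ∑ i, blockHead hdn x i + ∑ j, blockTail d x j := by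
  rw [← (finBlockEquiv hdn).sum_comp, Fintype.sum_sum_type]
  simp [blockHead, blockTail]

lemma dotProduct_eq_blockHead_add_blockTail [CommSemiring R] (hdn : d ≤ n) (u x : Fin n → R) :
    u ⬝ᵥ x = blockHead hdn u ⬝ᵥ blockHead hdn x + blockTail d u ⬝ᵥ blockTail d x :=
  sum_eq_sum_blockHead_add_sum_blockTail hdn _

lemma norm_eq_max_blockHead_blockTail (hdn : d ≤ n) (x : Fin n → ℝ) :
    ‖x‖ = max ‖blockHead hdn x‖ ‖blockTail d x‖ := by
  refine le_antisymm ((pi_norm_le_iff_of_nonneg (by positivity)).2 fun k => ?_)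
    (max_le ((pi_norm_le_iff_of_nonneg (norm_nonneg x)).2 fun i => norm_le_pi_norm x _)
      ((pi_norm_le_iff_of_nonneg (norm_nonneg x)).2 fun j => norm_le_pi_norm x _))
  obtain ⟨s | s, rfl⟩ := (finBlockEquiv hdn).surjective k
  · rw [finBlockEquiv_inl]; exact le_max_of_le_left (norm_le_pi_norm (blockHead hdn x) s)
  · rw [finBlockEquiv_inr]; exact le_max_of_le_right (norm_le_pi_norm (blockTail d x) s)

end Blocks

lemma exp_mul_le_mul_exp_iff {a C u w : ℝ} :
    Real.exp u * a ≤ C * Real.exp w ↔ a ≤ C * Real.exp (w - u) := by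
  rw [Real.exp_sub, mul_div_assoc', le_div_iff₀ (Real.exp_pos _), mul_comm]

section Flows

variable {n d : ℕ}

lemma blockHead_gA_mulVec (hdn : d ≤ n) (A : Matrix (Fin d) (Fin (n - d)) ℝ) (x : Fin n → ℝ) :
    blockHead hdn ((gA n d A : Matrix (Fin n) (Fin n) ℝ) *ᵥ x) =
      A *ᵥ blockTail d x + blockHead hdn x := by
  ext i
  simp only [blockHead, mulVec, dotProduct, Pi.add_apply]
  rw [sum_eq_sum_blockHead_add_sum_blockTail hdn, add_comm]
  congr 1
  · refine Finset.sum_congr rfl fun j _ => ?_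
    have hij : Fin.castLE hdn i ≠ ⟨d + j, by omega⟩ := by simp [Fin.ext_iff]; omega
    simp [blockTail, gA, hij]
  · have hlt : ∀ k : Fin d, ¬ d ≤ (k : ℕ) := fun k => not_le.2 k.isLt
    simp [blockHead, gA, hlt]

lemma blockTail_gA_mulVec (hdn : d ≤ n) (A : Matrix (Fin d) (Fin (n - d)) ℝ) (x : Fin n → ℝ) :
    blockTail d ((gA n d A : Matrix (Fin n) (Fin n) ℝ) *ᵥ x) = blockTail d x := by
  ext j
  simp only [blockTail, mulVec, dotProduct]
  rw [sum_eq_sum_blockHead_add_sum_blockTail hdn]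
  have hne : ∀ k : Fin d, (⟨d + j, by omega⟩ : Fin n) ≠ Fin.castLE hdn k := fun k => by
    simp [Fin.ext_iff]; omega
  simp [blockHead, blockTail, gA, hne, Fin.val_inj]

lemma norm_btFlow_mulVec (hd : 0 < d) (hdn : d ≤ n) (s : ℝ) (x : Fin n → ℝ) :
    ‖(btFlow n d hd hdn s : Matrix (Fin n) (Fin n) ℝ) *ᵥ x‖ =
      max (Real.exp (((n : ℝ) - d) / d * s) * ‖blockHead hdn x‖)
        (Real.exp (-s) * ‖blockTail d x‖) := by
  have hhead : blockHead hdn ((btFlow n d hd hdn s : Matrix (Fin n) (Fin n) ℝ) *ᵥ x) =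
      Real.exp (((n : ℝ) - d) / d * s) • blockHead hdn x := by
    ext i; simp [blockHead, btFlow, mulVec_diagonal]
  have htail : blockTail d ((btFlow n d hd hdn s : Matrix (Fin n) (Fin n) ℝ) *ᵥ x) =
      Real.exp (-s) • blockTail d x := by
    ext j; simp [blockTail, btFlow, mulVec_diagonal]
  rw [norm_eq_max_blockHead_blockTail hdn, hhead, htail, norm_smul, norm_smul,
    Real.norm_of_nonneg (Real.exp_pos _).le, Real.norm_of_nonneg (Real.exp_pos _).le]

lemma norm_btFlow_gA_mulVec_le_iff (hd : 0 < d) (hdn : d ≤ n)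
    (A : Matrix (Fin d) (Fin (n - d)) ℝ) (x : Fin n → ℝ) (R r t : ℝ) :
    ‖((btFlow n d hd hdn (d * t) * gA n d A : SLn n) : Matrix (Fin n) (Fin n) ℝ) *ᵥ x‖ ≤
        R * Real.exp (-(r * t)) ↔
      ‖blockHead hdn ((gA n d A : Matrix (Fin n) (Fin n) ℝ) *ᵥ x)‖ ≤
          R * Real.exp (-(((n : ℝ) - d + r) * t)) ∧
        ‖blockTail d ((gA n d A : Matrix (Fin n) (Fin n) ℝ) *ᵥ x)‖ ≤
          R * Real.exp (((d : ℝ) - r) * t) := by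
  have hd' : (d : ℝ) ≠ 0 := by positivity
  have hhead : -(r * t) - ((n : ℝ) - d) / d * (d * t) = -(((n : ℝ) - d + r) * t) := by
    field_simp; ring
  have htail : -(r * t) - -(d * t) = ((d : ℝ) - r) * t := by ring
  rw [Matrix.SpecialLinearGroup.coe_mul, ← mulVec_mulVec, norm_btFlow_mulVec, max_le_iff,
    exp_mul_le_mul_exp_iff, exp_mul_le_mul_exp_iff, hhead, htail]

lemma gtFlow_mulVec_apply (hn : 0 < n) (t : ℝ) (z : Fin n → ℝ) (k : Fin n) :
    ((gtFlow n hn t : Matrix (Fin n) (Fin n) ℝ) *ᵥ z) k =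
      (if (k : ℕ) = 0 then Real.exp (((n : ℝ) - 1) * t) else Real.exp (-t)) * z k :=
  mulVec_diagonal _ _ _

lemma norm_gtFlow_mulVec_le (hn : 0 < n) {t M : ℝ} {z : Fin n → ℝ}
    (hzero : Real.exp (((n : ℝ) - 1) * t) * |z ⟨0, hn⟩| ≤ M) (hall : Real.exp (-t) * ‖z‖ ≤ M) :
    ‖(gtFlow n hn t : Matrix (Fin n) (Fin n) ℝ) *ᵥ z‖ ≤ M := by
  refine (pi_norm_le_iff_of_nonneg ((by positivity : (0 : ℝ) ≤ _).trans hall)).2 fun k => ?_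
  rw [gtFlow_mulVec_apply, Real.norm_eq_abs, abs_mul, abs_of_pos (by split_ifs <;> positivity)]
  split_ifs with hk
  · rwa [show k = ⟨0, hn⟩ from Fin.ext hk]
  · exact le_trans (by gcongr; exact norm_le_pi_norm z k) hall

lemma exp_mul_abs_apply_zero_le_norm_gtFlow_mulVec (hn : 0 < n) (t : ℝ) (z : Fin n → ℝ) :
    Real.exp (((n : ℝ) - 1) * t) * |z ⟨0, hn⟩| ≤
      ‖(gtFlow n hn t : Matrix (Fin n) (Fin n) ℝ) *ᵥ z‖ := by
  have := norm_le_pi_norm ((gtFlow n hn t : Matrix (Fin n) (Fin n) ℝ) *ᵥ z) ⟨0, hn⟩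
  rwa [gtFlow_mulVec_apply, if_pos rfl, Real.norm_eq_abs, abs_mul,
    abs_of_pos (Real.exp_pos _)] at this

lemma norm_le_exp_mul_norm_gtFlow_mulVec (hn : 0 < n) {t : ℝ} (ht : 0 ≤ t) (z : Fin n → ℝ) :
    ‖z‖ ≤ Real.exp t * ‖(gtFlow n hn t : Matrix (Fin n) (Fin n) ℝ) *ᵥ z‖ := by
  refine (pi_norm_le_iff_of_nonneg (by positivity)).2 fun k => ?_
  have hk := norm_le_pi_norm ((gtFlow n hn t : Matrix (Fin n) (Fin n) ℝ) *ᵥ z) k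
  rw [gtFlow_mulVec_apply, norm_mul, Real.norm_of_nonneg (by split_ifs <;> positivity)] at hk
  have hcoef :
      Real.exp (-t) ≤ if (k : ℕ) = 0 then Real.exp (((n : ℝ) - 1) * t) else Real.exp (-t) := by
    split_ifs
    · exact Real.exp_le_exp.2 (by nlinarith [(Nat.cast_nonneg n : (0 : ℝ) ≤ n)])
    · exact le_rfl
  calc ‖z k‖ = Real.exp t * (Real.exp (-t) * ‖z k‖) := by
        rw [← mul_assoc, ← Real.exp_add, add_neg_cancel, Real.exp_zero, one_mul]
    _ ≤ Real.exp t * ‖(gtFlow n hn t : Matrix (Fin n) (Fin n) ℝ) *ᵥ z‖ := by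
        gcongr
        exact (mul_le_mul_of_nonneg_right hcoef (norm_nonneg _)).trans hk

lemma continuous_norm_coe_mul_mul_mulVec (g h : SLn n) (x : Fin n → ℝ) :
    Continuous fun ω : SLn n => ‖((g * ω * h : SLn n) : Matrix (Fin n) (Fin n) ℝ) *ᵥ x‖ := by
  simp only [Matrix.SpecialLinearGroup.coe_mul]
  exact ((continuous_const.matrix_mul continuous_induced_dom).matrix_mul
    continuous_const).matrix_mulVec continuous_const |>.norm

end Flows

section Bounds

lemma exists_norm_mulVec_le_of_isCompact {m k : Type*} [Fintype m] [Fintype k] [DecidableEq k]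
    {K : Set (Matrix m k ℝ)} (hK : IsCompact K) :
    ∃ B, 0 < B ∧ ∀ M ∈ K, ∀ x, ‖M *ᵥ x‖ ≤ B * ‖x‖ := by
  let L : Matrix m k ℝ →ₗ[ℝ] (k → ℝ) →L[ℝ] (m → ℝ) :=
    LinearMap.toContinuousLinearMap.toLinearMap ∘ₗ Matrix.toLin'.toLinearMap
  obtain ⟨B, hB⟩ := (hK.image L.continuous_of_finiteDimensional).isBounded.exists_norm_le
  refine ⟨max B 1, by positivity, fun M hM x => ?_⟩
  calc ‖M *ᵥ x‖ = ‖L M x‖ := rfl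
    _ ≤ ‖L M‖ * ‖x‖ := (L M).le_opNorm x
    _ ≤ max B 1 * ‖x‖ := by gcongr; exact (hB _ ⟨M, hM, rfl⟩).trans (le_max_left _ _)

lemma exists_norm_le_of_span_eq_top {ι : Type*} [Fintype ι] {W : Set (ι → ℝ)}
    (hW : Submodule.span ℝ W = ⊤) :
    ∃ c, ∀ (x : ι → ℝ) (M : ℝ), 0 ≤ M → (∀ w ∈ W, |w ⬝ᵥ x| ≤ M) → ‖x‖ ≤ c * M := by
  obtain ⟨s, hsW, hs_span, hs_li⟩ := exists_linearIndependent ℝ W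
  have : Fintype s := hs_li.setFinite.fintype
  let T : (ι → ℝ) →ₗ[ℝ] (s → ℝ) := (Matrix.of fun (w : s) => (w : ι → ℝ)).mulVecLin
  have hker : LinearMap.ker T = ⊥ := by
    refine LinearMap.ker_eq_bot'.2 fun x hx => ?_
    have hperp : ∀ u ∈ Submodule.span ℝ s, u ⬝ᵥ x = 0 := fun u hu => by
      induction hu using Submodule.span_induction with
      | mem u hu => exact congrFun hx ⟨u, hu⟩
      | zero => exact zero_dotProduct x
      | add u v _ _ hu hv => rw [add_dotProduct, hu, hv, add_zero]
      | smul a u _ hu => rw [smul_dotProduct, hu, smul_zero]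
    exact dotProduct_self_eq_zero.1 (hperp x (by simp [hs_span, hW]))
  obtain ⟨K, -, hK⟩ := T.exists_antilipschitzWith hker
  refine ⟨K, fun x M hM hx => (hK.le_mul_norm (map_zero T) x).trans ?_⟩
  gcongr
  exact (pi_norm_le_iff_of_nonneg hM).2 fun w => hx w (hsW w.2)

lemma le_biSup_of_isCompact {X : Type*} [TopologicalSpace X] {K : Set X} (hK : IsCompact K)
    {f : X → ℝ} (hf : Continuous f) {x : X} (hx : x ∈ K) : f x ≤ ⨆ y ∈ K, f y :=
  le_ciSup₂ (f := fun y (_ : y ∈ K) => f y) ((hK.bddAbove_image hf.continuousOn).mono <| by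
    rintro _ ⟨_, ⟨y, rfl⟩, ⟨hy, rfl⟩⟩; exact ⟨y, hy, rfl⟩) x hx

variable {n d : ℕ}

lemma mulVec_apply_eq_dotProduct_blockHead (hdn : d ≤ n) {M : Matrix (Fin n) (Fin n) ℝ}
    {k : Fin n} (hrow : blockTail d (M k) = 0) (y : Fin n → ℝ) :
    (M *ᵥ y) k = blockHead hdn (M k) ⬝ᵥ blockHead hdn y := by
  rw [mulVec, dotProduct_eq_blockHead_add_blockTail hdn, hrow, zero_dotProduct, add_zero]

lemma abs_mulVec_apply_le_norm_blockHead (hdn : d ≤ n) {M : Matrix (Fin n) (Fin n) ℝ}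
    {k : Fin n} (hrow : blockTail d (M k) = 0) {B : ℝ} (hB : ∀ x, ‖M *ᵥ x‖ ≤ B * ‖x‖)
    (y : Fin n → ℝ) : |(M *ᵥ y) k| ≤ B * ‖blockHead hdn y‖ := by
  -- Row `k` does not see the tail, so `y` may be replaced by its head padded with zeros.
  set y' := (blockEquiv hdn).symm (blockHead hdn y, 0)
  have hy' : blockEquiv hdn y' = (blockHead hdn y, 0) := (blockEquiv hdn).apply_symm_apply _
  have hhead : blockHead hdn y' = blockHead hdn y := congrArg Prod.fst hy'
  have htail : blockTail d y' = 0 := congrArg Prod.snd hy'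
  calc |(M *ᵥ y) k| = |(M *ᵥ y') k| := by
        rw [mulVec_apply_eq_dotProduct_blockHead hdn hrow,
          mulVec_apply_eq_dotProduct_blockHead hdn hrow, hhead]
    _ ≤ ‖M *ᵥ y'‖ := norm_le_pi_norm (M *ᵥ y') k
    _ ≤ B * ‖y'‖ := hB y'
    _ = B * ‖blockHead hdn y‖ := by
        rw [norm_eq_max_blockHead_blockTail hdn, hhead, htail, norm_zero,
          max_eq_left (norm_nonneg _)]

end Bounds

/-- Conditions (2) and (3) both have the form `ExistsNonzeroSeq P` for a predicate `P C t v`. -/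
def ExistsNonzeroSeq {α : Type*} [Zero α] (P : ℝ → ℝ → α → Prop) : Prop :=
  ∃ C : ℝ, 0 < C ∧ ∃ t : ℕ → ℝ, Tendsto t atTop atTop ∧
    ∃ v : ℕ → α, (∀ i, v i ≠ 0) ∧ ∀ i, P C (t i) (v i)

namespace ExistsNonzeroSeq

variable {α β : Type*} [Zero α] [Zero β] {P Q : ℝ → ℝ → α → Prop}

lemma mono (hPQ : ∀ C, 0 < C → ∃ C', 0 < C' ∧ ∀ t, 0 ≤ t → ∀ v, P C t v → Q C' t v)
    (h : ExistsNonzeroSeq P) : ExistsNonzeroSeq Q := by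
  obtain ⟨C, hC, t, ht, v, hv, hP⟩ := h
  obtain ⟨C', hC', hQ⟩ := hPQ C hC
  obtain ⟨N, hN⟩ := eventually_atTop.1 (ht.eventually_ge_atTop 0)
  exact ⟨C', hC', fun i => t (i + N), ht.comp (tendsto_add_atTop_nat N), fun i => v (i + N),
    fun i => hv _, fun i => hQ _ (hN _ (Nat.le_add_left N i)) _ (hP _)⟩

lemma congr_equiv {R : ℝ → ℝ → β → Prop} (e : α ≃ β) (he : e 0 = 0)
    (hPR : ∀ C t v, P C t v ↔ R C t (e v)) : ExistsNonzeroSeq P ↔ ExistsNonzeroSeq R := by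
  have hne : ∀ v, e v ≠ 0 ↔ v ≠ 0 := fun v => (e.injective.eq_iff' he).not
  constructor
  · rintro ⟨C, hC, t, ht, v, hv, hP⟩
    exact ⟨C, hC, t, ht, fun i => e (v i), fun i => (hne _).2 (hv i), fun i => (hPR ..).1 (hP i)⟩
  · rintro ⟨C, hC, t, ht, w, hw, hR⟩
    refine ⟨C, hC, t, ht, fun i => e.symm (w i), fun i => (hne _).1 ?_, fun i => (hPR ..).2 ?_⟩
    · rw [e.apply_symm_apply]; exact hw i
    · rw [e.apply_symm_apply]; exact hR i

end ExistsNonzeroSeq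

section Diophantine

variable {ι κ : Type*} [Fintype ι] [Fintype κ]

lemma one_le_norm_intCast {q : κ → ℤ} (hq : q ≠ 0) : 1 ≤ ‖fun j => (q j : ℝ)‖ := by
  obtain ⟨j, hj⟩ := Function.ne_iff.1 hq
  calc (1 : ℝ) ≤ |(q j : ℝ)| := by exact_mod_cast Int.one_le_abs hj
    _ ≤ _ := norm_le_pi_norm (fun j => (q j : ℝ)) j

lemma norm_intCast_rpow_neg_le_one (q : κ → ℤ) {ρ : ℝ} (hρ : 0 < ρ) :
    ‖fun j => (q j : ℝ)‖ ^ (-ρ) ≤ 1 := by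
  rcases eq_or_ne q 0 with rfl | hq
  · simp [← Pi.zero_def, Real.zero_rpow (neg_ne_zero.2 hρ.ne')]
  · exact Real.rpow_le_one_of_one_le_of_nonpos (one_le_norm_intCast hq) (by linarith)

lemma finite_setOf_norm_intCast_le [DecidableEq κ] (M : ℝ) :
    {q : κ → ℤ | ‖fun j => (q j : ℝ)‖ ≤ M}.Finite := by
  refine (Set.finite_Icc (fun _ => -⌈M⌉) fun _ => ⌈M⌉).subset fun q hq =>
    ⟨fun j => ?_, fun j => ?_⟩ <;>
  have hqj := abs_le.1 ((norm_le_pi_norm (fun j => (q j : ℝ)) j).trans hq) <;>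
  have hM := Int.le_ceil M
  · exact_mod_cast (by linarith : -(⌈M⌉ : ℝ) ≤ q j)
  · exact_mod_cast (by linarith : (q j : ℝ) ≤ ⌈M⌉)

variable (A : Matrix ι κ ℝ)

-- `MemW ρ A` unfolds to `∃ C, 0 < C ∧ (approxSet A ρ C).Infinite`.
def approxSet (ρ C : ℝ) : Set ((ι → ℤ) × (κ → ℤ)) :=
  {pq | ‖A *ᵥ (fun j => (pq.2 j : ℝ)) + (fun i => (pq.1 i : ℝ))‖ ≤
    C * ‖fun j => (pq.2 j : ℝ)‖ ^ (-ρ)}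

def IsApprox (a b C t : ℝ) (pq : (ι → ℤ) × (κ → ℤ)) : Prop :=
  ‖A *ᵥ (fun j => (pq.2 j : ℝ)) + (fun i => (pq.1 i : ℝ))‖ ≤ C * Real.exp (-(a * t)) ∧
    ‖fun j => (pq.2 j : ℝ)‖ ≤ C * Real.exp (b * t)

lemma memW_of_mulVec_add_eq_zero (ρ : ℝ) {p : ι → ℤ} {q : κ → ℤ} (hq : q ≠ 0)
    (h : A *ᵥ (fun j => (q j : ℝ)) + (fun i => (p i : ℝ)) = 0) : MemW ρ A := by
  obtain ⟨j, hj⟩ := Function.ne_iff.1 hq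
  refine ⟨1, one_pos, Set.infinite_of_injective_forall_mem (f := fun k : ℤ => (k • p, k • q))
    (fun a b hab => mul_right_cancel₀ hj (congrFun (congrArg Prod.snd hab) j)) fun k => ?_⟩
  have hk : A *ᵥ (fun j => ((k • q) j : ℝ)) + (fun i => ((k • p) i : ℝ)) =
      (k : ℝ) • (A *ᵥ (fun j => (q j : ℝ)) + (fun i => (p i : ℝ))) := by
    ext i; simp [mulVec, dotProduct, mul_add, Finset.mul_sum, mul_left_comm _ (k : ℝ)]
  change ‖_‖ ≤ _
  rw [hk, h, smul_zero, norm_zero]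
  positivity

lemma finite_approxSet_inter_norm_le [DecidableEq ι] [DecidableEq κ] {ρ : ℝ} (hρ : 0 < ρ)
    {C : ℝ} (hC : 0 ≤ C) (M : ℝ) :
    (approxSet A ρ C ∩ {pq | ‖fun j => (pq.2 j : ℝ)‖ ≤ M}).Finite := by
  obtain ⟨B, hB0, hB⟩ := exists_norm_mulVec_le_of_isCompact (isCompact_singleton (x := A))
  refine ((finite_setOf_norm_intCast_le (C + B * M)).prod (finite_setOf_norm_intCast_le M)).subset
    fun pq ⟨hpq, hM⟩ => ⟨?_, hM⟩
  set q : κ → ℝ := fun j => (pq.2 j : ℝ)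
  calc ‖fun i => (pq.1 i : ℝ)‖ = ‖(A *ᵥ q + fun i => (pq.1 i : ℝ)) - A *ᵥ q‖ := by
        rw [add_sub_cancel_left]
    _ ≤ ‖A *ᵥ q + fun i => (pq.1 i : ℝ)‖ + ‖A *ᵥ q‖ := norm_sub_le _ _
    _ ≤ C * 1 + B * M := by
        gcongr
        · exact hpq.trans (by gcongr; exact norm_intCast_rpow_neg_le_one _ hρ)
        · exact (hB A rfl q).trans (mul_le_mul_of_nonneg_left hM hB0.le)
    _ = C + B * M := by ring

lemma snd_ne_zero_of_isApprox {a b C t : ℝ} {pq : (ι → ℤ) × (κ → ℤ)}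
    (h : IsApprox A a b C t pq) (hsmall : C * Real.exp (-(a * t)) < 1) (hpq : pq ≠ 0) :
    pq.2 ≠ 0 := fun hq => by
  have hp : pq.1 ≠ 0 := fun hp => hpq (Prod.ext hp hq)
  have hle : ‖fun i => (pq.1 i : ℝ)‖ ≤ C * Real.exp (-(a * t)) := by
    simpa [hq, ← Pi.zero_def] using h.1
  linarith [one_le_norm_intCast hp]

lemma mem_approxSet_of_isApprox {a b C t : ℝ} (ha : 0 ≤ a) (hb : 0 < b) (hC : 0 ≤ C)
    {pq : (ι → ℤ) × (κ → ℤ)} (h : IsApprox A a b C t pq) (hq : pq.2 ≠ 0) :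
    pq ∈ approxSet A (a / b) (C * C ^ (a / b)) := by
  set q := ‖fun j => (pq.2 j : ℝ)‖
  have hq0 : 0 < q := zero_lt_one.trans_le (one_le_norm_intCast hq)
  have hqa : q ^ (a / b) ≤ C ^ (a / b) * Real.exp (a * t) := by
    calc q ^ (a / b) ≤ (C * Real.exp (b * t)) ^ (a / b) := by
          gcongr; exact h.2
      _ = C ^ (a / b) * Real.exp (a * t) := by
          rw [Real.mul_rpow hC (Real.exp_pos _).le, ← Real.exp_mul]
          congr 2; field_simp
  calc _ ≤ C * Real.exp (-(a * t)) := h.1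
    _ ≤ C * (C ^ (a / b) * q ^ (-(a / b))) := by
        gcongr
        rw [Real.exp_neg, Real.rpow_neg hq0.le, ← div_eq_mul_inv,
          le_div_iff₀ (Real.rpow_pos_of_pos hq0 _), inv_mul_le_iff₀ (Real.exp_pos _), mul_comm]
        exact hqa
    _ = C * C ^ (a / b) * q ^ (-(a / b)) := by ring

lemma existsNonzeroSeq_of_memW [DecidableEq ι] [DecidableEq κ] {a b : ℝ} (ha : 0 < a)
    (hb : 0 < b) (h : MemW (a / b) A) : ExistsNonzeroSeq (IsApprox A a b) := by
  obtain ⟨C, hC, hS⟩ := h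
  have hunbdd : ∀ M : ℝ, ∃ pq ∈ approxSet A (a / b) C, M < ‖fun j => (pq.2 j : ℝ)‖ :=
    fun M => by
      obtain ⟨pq, hpq, hM⟩ :=
        (hS.sdiff (finite_approxSet_inter_norm_le A (div_pos ha hb) hC.le M)).nonempty
      exact ⟨pq, hpq, lt_of_not_ge fun h => hM ⟨hpq, h⟩⟩
  choose pq hpqS hpq using fun k : ℕ => hunbdd k
  set Q : ℕ → ℝ := fun k => ‖fun j => ((pq k).2 j : ℝ)‖
  have hQ : ∀ k, 0 < Q k := fun k => (Nat.cast_nonneg k).trans_lt (hpq k)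
  have hexp : ∀ k, Real.exp (b * (Real.log (Q k) / b)) = Q k := fun k => by
    rw [mul_div_cancel₀ _ hb.ne', Real.exp_log (hQ k)]
  refine ⟨max C 1, by positivity, fun k => Real.log (Q k) / b,
    (Real.tendsto_log_atTop.comp (tendsto_atTop_mono (fun k => (hpq k).le)
      tendsto_natCast_atTop_atTop)).atTop_div_const hb, pq, fun k hk => (hQ k).ne' ?_,
    fun k => ⟨(hpqS k).trans ?_, ?_⟩⟩
  · simp [Q, hk, ← Pi.zero_def]
  · calc C * Q k ^ (-(a / b)) = C * Real.exp (-(a * (Real.log (Q k) / b))) := by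
          rw [Real.rpow_def_of_pos (hQ k)]; ring_nf
      _ ≤ _ := by gcongr; exact le_max_left _ _
  · rw [hexp k]
    exact le_mul_of_one_le_left (hQ k).le (le_max_right _ _)

lemma memW_of_existsNonzeroSeq {a b : ℝ} (ha : 0 < a) (hb : 0 < b)
    (h : ExistsNonzeroSeq (IsApprox A a b)) : MemW (a / b) A := by
  obtain ⟨C, hC, t, ht, pq, hne, hbd⟩ := h
  set err : (ι → ℤ) × (κ → ℤ) → ι → ℝ :=
    fun pq => A *ᵥ (fun j => (pq.2 j : ℝ)) + (fun i => (pq.1 i : ℝ))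
  have hsmall : Tendsto (fun i => C * Real.exp (-(a * t i))) atTop (𝓝 0) := by
    simpa using (Real.tendsto_exp_neg_atTop_nhds_zero.comp (ht.const_mul_atTop ha)).const_mul C
  obtain ⟨N, hN⟩ := eventually_atTop.1 (hsmall.eventually (gt_mem_nhds one_pos))
  have hq : ∀ i ≥ N, (pq i).2 ≠ 0 := fun i hi =>
    snd_ne_zero_of_isApprox A (hbd i) (hN i hi) (hne i)
  have hmem : ∀ i ≥ N, pq i ∈ approxSet A (a / b) (C * C ^ (a / b)) := fun i hi =>
    mem_approxSet_of_isApprox A ha.le hb hC.le (hbd i) (hq i hi)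
  -- Either an exact solution `Aq + p = 0` exists, and its multiples are solutions, or the errors
  -- along the sequence are positive and tend to `0`, so no finite set contains all the `pq i`.
  by_cases hexact : ∃ pq : (ι → ℤ) × (κ → ℤ), pq.2 ≠ 0 ∧ err pq = 0
  · obtain ⟨⟨p, q⟩, hq, h0⟩ := hexact
    exact memW_of_mulVec_add_eq_zero A _ hq h0
  push Not at hexact
  refine ⟨C * C ^ (a / b), by positivity, fun hfin => ?_⟩
  obtain ⟨m, ⟨-, hm⟩, hmin⟩ := Set.exists_min_image
    {pq ∈ approxSet A (a / b) (C * C ^ (a / b)) | pq.2 ≠ 0} (fun pq => ‖err pq‖)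
    (hfin.subset fun _ h => h.1) ⟨pq N, hmem N le_rfl, hq N le_rfl⟩
  obtain ⟨N', hN'⟩ := eventually_atTop.1
    (hsmall.eventually (gt_mem_nhds (norm_pos_iff.2 (hexact m hm))))
  have hi := hmin (pq (max N N')) ⟨hmem _ (le_max_left _ _), hq _ (le_max_left _ _)⟩
  linarith [(hbd (max N N')).1, hN' (max N N') (le_max_right _ _)]

end Diophantine

section Interpretation

variable {n d : ℕ}

lemma isApprox_blockEquiv_iff (hdn : d ≤ n) (A : Matrix (Fin d) (Fin (n - d)) ℝ) (a b C t : ℝ)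
    (v : Fin n → ℤ) :
    IsApprox A a b C t (blockEquiv hdn v) ↔
      ‖blockHead hdn ((gA n d A : Matrix (Fin n) (Fin n) ℝ) *ᵥ fun k => (v k : ℝ))‖ ≤
          C * Real.exp (-(a * t)) ∧
        ‖blockTail d ((gA n d A : Matrix (Fin n) (Fin n) ℝ) *ᵥ fun k => (v k : ℝ))‖ ≤
          C * Real.exp (b * t) := by
  rw [blockHead_gA_mulVec hdn, blockTail_gA_mulVec hdn]
  rfl

lemma memW_iff_existsNonzeroSeq (hdn : d ≤ n) (A : Matrix (Fin d) (Fin (n - d)) ℝ)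
    {a b : ℝ} (ha : 0 < a) (hb : 0 < b) :
    MemW (a / b) A ↔ ExistsNonzeroSeq fun C t v => IsApprox A a b C t (blockEquiv hdn v) :=
  (Iff.intro (existsNonzeroSeq_of_memW A ha hb) (memW_of_existsNonzeroSeq A ha hb)).trans
    (ExistsNonzeroSeq.congr_equiv (blockEquiv hdn) rfl fun _ _ _ => Iff.rfl).symm

lemma existsNonzeroSeq_btFlow_iff (hd : 0 < d) (hdn : d ≤ n)
    (A : Matrix (Fin d) (Fin (n - d)) ℝ) (r : ℝ) :
    (ExistsNonzeroSeq fun R t (v : Fin n → ℤ) =>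
      ‖((btFlow n d hd hdn (d * t) * gA n d A : SLn n) : Matrix (Fin n) (Fin n) ℝ) *ᵥ
        fun k => (v k : ℝ)‖ ≤ R * Real.exp (-(r * t))) ↔
    ExistsNonzeroSeq fun C t v =>
      IsApprox A ((n : ℝ) - d + r) ((d : ℝ) - r) C t (blockEquiv hdn v) :=
  ExistsNonzeroSeq.congr_equiv (Equiv.refl _) rfl fun _ _ _ =>
    (norm_btFlow_gA_mulVec_le_iff hd hdn A _ _ _ _).trans (isApprox_blockEquiv_iff hdn A ..).symm

lemma iSup_norm_gtFlow_le_of_isApprox (hn : 0 < n) (hdn : d ≤ n)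
    (A : Matrix (Fin d) (Fin (n - d)) ℝ) {Ω : Set (SLn n)}
    (hrow : ∀ ω ∈ Ω, blockTail d ((ω : Matrix (Fin n) (Fin n) ℝ) ⟨0, hn⟩) = 0) {B : ℝ}
    (hB : ∀ ω ∈ Ω, ∀ x, ‖(ω : Matrix (Fin n) (Fin n) ℝ) *ᵥ x‖ ≤ B * ‖x‖) (hB0 : 0 ≤ B)
    {r C t : ℝ} (hC : 0 ≤ C) (ht : 0 ≤ t) {v : Fin n → ℤ}
    (hv : IsApprox A ((n : ℝ) - d + r) ((d : ℝ) - r) C t (blockEquiv hdn v)) :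
    ⨆ ω ∈ Ω, ‖((gtFlow n hn t * ω * gA n d A : SLn n) : Matrix (Fin n) (Fin n) ℝ) *ᵥ
      fun k => (v k : ℝ)‖ ≤ B * C * Real.exp (((d : ℝ) - r - 1) * t) := by
  rw [isApprox_blockEquiv_iff] at hv
  set y := (gA n d A : Matrix (Fin n) (Fin n) ℝ) *ᵥ fun k => (v k : ℝ)
  obtain ⟨hhead, htail⟩ := hv
  have hy : ‖y‖ ≤ C * Real.exp (((d : ℝ) - r) * t) := by
    refine (norm_eq_max_blockHead_blockTail hdn y).trans_le (max_le (hhead.trans ?_) htail)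
    gcongr
    nlinarith [(Nat.cast_nonneg n : (0 : ℝ) ≤ n)]
  refine Real.iSup_le (fun ω => Real.iSup_le (fun hω => ?_) (by positivity)) (by positivity)
  rw [Matrix.SpecialLinearGroup.coe_mul, Matrix.SpecialLinearGroup.coe_mul, ← mulVec_mulVec,
    ← mulVec_mulVec]
  apply norm_gtFlow_mulVec_le hn
  · calc Real.exp (((n : ℝ) - 1) * t) * |((ω : Matrix (Fin n) (Fin n) ℝ) *ᵥ y) ⟨0, hn⟩|
        ≤ Real.exp (((n : ℝ) - 1) * t) * (B * (C * Real.exp (-(((n : ℝ) - d + r) * t)))) := by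
          gcongr
          exact (abs_mulVec_apply_le_norm_blockHead hdn (hrow ω hω) (hB ω hω) y).trans
            (by gcongr)
      _ = B * C * Real.exp (((d : ℝ) - r - 1) * t) := by
          rw [show ((d : ℝ) - r - 1) * t = ((n : ℝ) - 1) * t + -(((n : ℝ) - d + r) * t) by ring,
            Real.exp_add]
          ring
  · calc Real.exp (-t) * ‖(ω : Matrix (Fin n) (Fin n) ℝ) *ᵥ y‖
        ≤ Real.exp (-t) * (B * (C * Real.exp (((d : ℝ) - r) * t))) := by
          gcongr
          exact (hB ω hω y).trans (by gcongr)
      _ = B * C * Real.exp (((d : ℝ) - r - 1) * t) := by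
          rw [show ((d : ℝ) - r - 1) * t = -t + ((d : ℝ) - r) * t by ring, Real.exp_add]
          ring

lemma isApprox_of_iSup_norm_gtFlow_le (hn : 0 < n) (hdn : d ≤ n)
    (A : Matrix (Fin d) (Fin (n - d)) ℝ) {Ω : Set (SLn n)} (hΩ : IsCompact Ω)
    (hrow : ∀ ω ∈ Ω, blockTail d ((ω : Matrix (Fin n) (Fin n) ℝ) ⟨0, hn⟩) = 0) {c : ℝ}
    (hc : ∀ (x : Fin d → ℝ) (M : ℝ), 0 ≤ M →
      (∀ ω ∈ Ω, |blockHead hdn ((ω : Matrix (Fin n) (Fin n) ℝ) ⟨0, hn⟩) ⬝ᵥ x| ≤ M) →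
        ‖x‖ ≤ c * M)
    {ω₀ : SLn n} (hω₀ : ω₀ ∈ Ω) {B₀ : ℝ} (hB₀0 : 0 ≤ B₀)
    (hB₀ : ∀ x, ‖x‖ ≤ B₀ * ‖(ω₀ : Matrix (Fin n) (Fin n) ℝ) *ᵥ x‖)
    {r C t : ℝ} (hC : 0 ≤ C) (ht : 0 ≤ t) {v : Fin n → ℤ}
    (hv : ⨆ ω ∈ Ω, ‖((gtFlow n hn t * ω * gA n d A : SLn n) : Matrix (Fin n) (Fin n) ℝ) *ᵥ
      fun k => (v k : ℝ)‖ ≤ C * Real.exp (((d : ℝ) - r - 1) * t)) :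
    IsApprox A ((n : ℝ) - d + r) ((d : ℝ) - r) (max c B₀ * C) t (blockEquiv hdn v) := by
  rw [isApprox_blockEquiv_iff]
  set y := (gA n d A : Matrix (Fin n) (Fin n) ℝ) *ᵥ fun k => (v k : ℝ)
  have hbound : ∀ ω ∈ Ω, ‖(gtFlow n hn t : Matrix (Fin n) (Fin n) ℝ) *ᵥ
      ((ω : Matrix (Fin n) (Fin n) ℝ) *ᵥ y)‖ ≤ C * Real.exp (((d : ℝ) - r - 1) * t) := by
    intro ω hω
    refine le_trans ?_ ((le_biSup_of_isCompact hΩ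
      (continuous_norm_coe_mul_mul_mulVec (gtFlow n hn t) (gA n d A) _) hω).trans hv)
    simp only [y, Matrix.SpecialLinearGroup.coe_mul, mulVec_mulVec, Matrix.mul_assoc, le_refl]
  constructor
  · refine (hc _ (C * Real.exp (-(((n : ℝ) - d + r) * t))) (by positivity)
      fun ω hω => ?_).trans ?_
    · rw [← mulVec_apply_eq_dotProduct_blockHead hdn (hrow ω hω),
        show -(((n : ℝ) - d + r) * t) = ((d : ℝ) - r - 1) * t - ((n : ℝ) - 1) * t by ring,
        ← exp_mul_le_mul_exp_iff]
      exact (exp_mul_abs_apply_zero_le_norm_gtFlow_mulVec hn t _).trans (hbound ω hω)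
    · rw [← mul_assoc]
      gcongr
      exact le_max_left _ _
  · calc ‖blockTail d y‖ ≤ ‖y‖ :=
          (norm_eq_max_blockHead_blockTail hdn y).symm ▸ le_max_right _ _
      _ ≤ B₀ * (Real.exp t * (C * Real.exp (((d : ℝ) - r - 1) * t))) := by
          refine (hB₀ y).trans ?_
          gcongr
          exact (norm_le_exp_mul_norm_gtFlow_mulVec hn ht _).trans
            (by gcongr; exact hbound ω₀ hω₀)
      _ = B₀ * C * Real.exp (((d : ℝ) - r) * t) := by
          rw [show ((d : ℝ) - r) * t = t + ((d : ℝ) - r - 1) * t by ring, Real.exp_add]; ring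
      _ ≤ max c B₀ * C * Real.exp (((d : ℝ) - r) * t) := by
          gcongr; exact le_max_right _ _

lemma existsNonzeroSeq_gtFlow_iff (hn : 0 < n) (hdn : d ≤ n)
    (A : Matrix (Fin d) (Fin (n - d)) ℝ) {Ω : Set (SLn n)} (hΩc : IsCompact Ω)
    (hΩne : Ω.Nonempty)
    (hΩrow : ∀ ω ∈ Ω, ∀ j : Fin n, d ≤ (j : ℕ) → (ω : Matrix (Fin n) (Fin n) ℝ) ⟨0, hn⟩ j = 0)
    (hΩspan : Submodule.span ℝ
      {w : Fin d → ℝ | ∃ ω ∈ Ω, ∀ i : Fin d,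
        w i = (ω : Matrix (Fin n) (Fin n) ℝ) ⟨0, hn⟩ (Fin.castLE hdn i)} = ⊤) (r : ℝ) :
    (ExistsNonzeroSeq fun C t (v : Fin n → ℤ) =>
      ⨆ ω ∈ Ω, ‖((gtFlow n hn t * ω * gA n d A : SLn n) : Matrix (Fin n) (Fin n) ℝ) *ᵥ
        fun k => (v k : ℝ)‖ ≤ C * Real.exp (((d : ℝ) - r - 1) * t)) ↔
    ExistsNonzeroSeq fun C t v =>
      IsApprox A ((n : ℝ) - d + r) ((d : ℝ) - r) C t (blockEquiv hdn v) := by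
  have hrow : ∀ ω ∈ Ω, blockTail d ((ω : Matrix (Fin n) (Fin n) ℝ) ⟨0, hn⟩) = 0 :=
    fun ω hω => funext fun j => hΩrow ω hω _ (Nat.le_add_right d j)
  obtain ⟨B, hB0, hB⟩ := exists_norm_mulVec_le_of_isCompact (hΩc.image continuous_induced_dom)
  obtain ⟨c, hc⟩ := exists_norm_le_of_span_eq_top hΩspan
  obtain ⟨ω₀, hω₀⟩ := hΩne
  obtain ⟨B₀, hB₀0, hB₀⟩ := exists_norm_mulVec_le_of_isCompact
    (isCompact_singleton (x := ((ω₀⁻¹ : SLn n) : Matrix (Fin n) (Fin n) ℝ)))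
  have hinv : ∀ x, ‖x‖ ≤ B₀ * ‖(ω₀ : Matrix (Fin n) (Fin n) ℝ) *ᵥ x‖ := fun x => by
    have := hB₀ _ rfl ((ω₀ : Matrix (Fin n) (Fin n) ℝ) *ᵥ x)
    rwa [mulVec_mulVec, ← Matrix.SpecialLinearGroup.coe_mul, inv_mul_cancel,
      Matrix.SpecialLinearGroup.coe_one, one_mulVec] at this
  constructor
  · refine ExistsNonzeroSeq.mono fun C hC =>
      ⟨max c B₀ * C, mul_pos (lt_max_of_lt_right hB₀0) hC, fun t ht v hv => ?_⟩
    refine isApprox_of_iSup_norm_gtFlow_le hn hdn A hΩc hrow (fun x M hM hx => hc x M hM ?_)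
      hω₀ hB₀0.le hinv hC.le ht hv
    rintro w ⟨ω, hω, hw⟩
    rw [show w = blockHead hdn ((ω : Matrix (Fin n) (Fin n) ℝ) ⟨0, hn⟩) from funext hw]
    exact hx ω hω
  · exact ExistsNonzeroSeq.mono fun C hC => ⟨B * C, by positivity, fun t ht v hv =>
      iSup_norm_gtFlow_le_of_isApprox hn hdn A hrow (fun ω hω => hB _ ⟨ω, hω, rfl⟩) hB0.le
        hC.le ht hv⟩

end Interpretation

/-- **Lemma (interpretation of `W_{(n-d+r)/(d-r)}(d, n-d)`).** -/
theorem interpretation_of_W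
    (n d : ℕ) (hn : 3 ≤ n) (hd : 2 ≤ d) (hdn : d ≤ n - 1)
    (r : ℝ) (hr0 : 0 < r) (hrd : r < d)
    (A : Matrix (Fin d) (Fin (n - d)) ℝ)
    (Ω : Set (SLn n)) (hΩc : IsCompact Ω) (hΩne : Ω.Nonempty)
    (hΩrow : ∀ ω ∈ Ω, ∀ j : Fin n, d ≤ (j : ℕ) →
      (ω : Matrix (Fin n) (Fin n) ℝ) ⟨0, by omega⟩ j = 0)
    (hΩspan : Submodule.span ℝ
      {w : Fin d → ℝ | ∃ ω ∈ Ω, ∀ i : Fin d,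
        w i = (ω : Matrix (Fin n) (Fin n) ℝ) ⟨0, by omega⟩ (Fin.castLE (by omega) i)} = ⊤) :
    (MemW (((n : ℝ) - d + r) / (d - r)) A ↔
      (∃ R : ℝ, 0 < R ∧ ∃ t : ℕ → ℝ, Tendsto t atTop atTop ∧
        ∃ v : ℕ → (Fin n → ℤ), (∀ i, v i ≠ 0) ∧ ∀ i,
          ‖((btFlow n d (by omega) (by omega) (d * t i) * gA n d A : SLn n) :
              Matrix (Fin n) (Fin n) ℝ).mulVec (fun j => ((v i j : ℝ)))‖
            ≤ R * Real.exp (-(r * t i)))) ∧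
    ((∃ R : ℝ, 0 < R ∧ ∃ t : ℕ → ℝ, Tendsto t atTop atTop ∧
        ∃ v : ℕ → (Fin n → ℤ), (∀ i, v i ≠ 0) ∧ ∀ i,
          ‖((btFlow n d (by omega) (by omega) (d * t i) * gA n d A : SLn n) :
              Matrix (Fin n) (Fin n) ℝ).mulVec (fun j => ((v i j : ℝ)))‖
            ≤ R * Real.exp (-(r * t i))) ↔
      (∃ C : ℝ, 0 < C ∧ ∃ t : ℕ → ℝ, Tendsto t atTop atTop ∧
        ∃ v : ℕ → (Fin n → ℤ), (∀ i, v i ≠ 0) ∧ ∀ i,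
          (⨆ ω ∈ Ω, ‖((gtFlow n (by omega) (t i) * ω * gA n d A : SLn n) :
              Matrix (Fin n) (Fin n) ℝ).mulVec (fun j => ((v i j : ℝ)))‖)
            ≤ C * Real.exp (((d : ℝ) - r - 1) * t i))) := by
  have hdn' : d ≤ n := by omega
  have ha : 0 < (n : ℝ) - d + r := by
    have : (d : ℝ) ≤ n := by exact_mod_cast hdn'
    linarith
  have hb : 0 < (d : ℝ) - r := by linarith
  have hbt := existsNonzeroSeq_btFlow_iff (by omega) hdn' A r
  exact ⟨(memW_iff_existsNonzeroSeq hdn' A ha hb).trans hbt.symm,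
    hbt.trans (existsNonzeroSeq_gtFlow_iff (by omega) hdn' A hΩc hΩne hΩrow hΩspan r).symm⟩
end
end

section
/- Let r be an integer with d ≤ r ≤ n−1 and let K be a subfield of ℝ. The following are equivalent: (1) L_A is contained in an affine subspace of ℝ^{n−1} of dimension r−1 of the form p + span_ℝ{w₁,…,w_{r−1}} with p, w₁,…,w_{r−1} ∈ K^{n−1}; (2) g_A ∈ P_d · P_r · SL_n(K), where SL_n(K) is the subgroup of SL_n(ℝ) consisting of matrices all of whose entries lie in K. -/
open Matrix MeasureTheory Filter Topology

noncomputable section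

/-!
Both conditions say that the first `d` rows of `g_A` lie in an `r`-dimensional subspace of `ℝⁿ`
spanned by `K`-rational vectors.

For (1), homogenise: `L_A ⊆ p + span w` iff every `(1, y)` with `y ∈ L_A` lies in
`span ((1, p), (0, w₁), …)`, and these vectors `(1, y)` are exactly the combinations
`(1, x) · [I_d | A]` of the first `d` rows of `g_A`. Conversely, a `K`-rational basis of a subspace
containing them can be brought to the form `(1, p), (0, wᵢ)` by eliminating the first coordinate.

For (2), `P_d P_r` consists of the matrices whose upper-right `d × (n - r)` block vanishes, and
`g h⁻¹` has this shape iff the first `d` rows of `g` lie in the span of the first `r` rows of `h`.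
Any `K`-rational basis of `r` vectors extends to the first rows of some `h ∈ SL_n(K)`.
-/

section LinearAlgebra

variable {F : Type*} [Field F]

theorem span_setOf_forall_mem_subfield (K : Subfield F) (ι : Type*) [Fintype ι] [DecidableEq ι] :
    Submodule.span F {x : ι → F | ∀ j, x j ∈ K} = ⊤ := by
  refine eq_top_iff.2 ((Pi.basisFun F ι).span_eq.ge.trans (Submodule.span_mono ?_))
  rintro _ ⟨i, rfl⟩ j
  rw [Pi.basisFun_apply, Pi.single_apply]
  split_ifs
  exacts [K.one_mem, K.zero_mem]

theorem exists_linearIndependent_extension_fin {V : Type*} [AddCommGroup V] [Module F V]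
    {t : Set V} {k m : ℕ} (hkm : k ≤ m)
    (hm : m ≤ Module.finrank F (Submodule.span F t)) {v : Fin k → V}
    (hv : LinearIndependent F v) (hvt : ∀ i, v i ∈ t) :
    ∃ w : Fin m → V, LinearIndependent F w ∧ (∀ i, w i ∈ t) ∧
      ∀ i, w (Fin.castLE hkm i) = v i := by
  induction m, hkm using Nat.le_induction with
  | base => exact ⟨v, hv, hvt, fun i => rfl⟩
  | succ m hkm ih =>
    obtain ⟨w, hw, hwt, hwv⟩ := ih (by omega)
    obtain ⟨x, hxt, hxw⟩ : ∃ x ∈ t, x ∉ Submodule.span F (Set.range w) := by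
      by_contra! h
      have := FiniteDimensional.span_of_finite F (Set.finite_range w)
      have := Submodule.finrank_mono (Submodule.span_le.2 h)
      rw [finrank_span_eq_card hw, Fintype.card_fin] at this
      omega
    refine ⟨Fin.snoc w x, linearIndependent_finSnoc.2 ⟨hw, hxw⟩,
      Fin.lastCases (by simpa only [Fin.snoc_last] using hxt)
        (by simpa only [Fin.snoc_castSucc] using hwt), fun i => ?_⟩
    rw [← hwv, ← Fin.castSucc_castLE, Fin.snoc_castSucc]

theorem exists_specialLinearGroup_rows_eq (K : Subfield F) {r n : ℕ} (hrn : r < n)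
    {v : Fin r → Fin n → F} (hv : LinearIndependent F v) (hvK : ∀ i j, v i j ∈ K) :
    ∃ h : SpecialLinearGroup (Fin n) F, (∀ i j, (h : Matrix (Fin n) (Fin n) F) i j ∈ K) ∧
      ∀ i, (h : Matrix (Fin n) (Fin n) F) (Fin.castLE hrn.le i) = v i := by
  obtain ⟨w, hw, hwK, hwv⟩ :=
    exists_linearIndependent_extension_fin (t := {x : Fin n → F | ∀ j, x j ∈ K}) hrn.le
    (by rw [span_setOf_forall_mem_subfield K, finrank_top, Module.finrank_fin_fun]) hv hvK
  set M : Matrix (Fin n) (Fin n) F := Matrix.of w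
  have hdet : M.det ≠ 0 :=
    (M.isUnit_iff_isUnit_det.1 (linearIndependent_rows_iff_isUnit.1 hw)).ne_zero
  have hdetK : M.det ∈ K := by
    have : M = K.subtype.mapMatrix (Matrix.of fun i j => (⟨M i j, hwK i j⟩ : K)) := rfl
    rw [this, ← RingHom.map_det]
    exact SetLike.coe_mem _
  -- normalise the determinant through the last row, which is not prescribed
  let last : Fin n := ⟨n - 1, by omega⟩
  refine ⟨⟨M.updateRow last ((M.det)⁻¹ • M last), ?_⟩, fun i j => ?_, fun i => ?_⟩
  · rw [det_updateRow_smul, updateRow_eq_self, inv_mul_cancel₀ hdet]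
  · rcases eq_or_ne i last with rfl | hi
    · simpa [M] using K.mul_mem (K.inv_mem hdetK) (hwK last j)
    · simpa [M, updateRow_ne hi] using hwK i j
  · have : Fin.castLE hrn.le i ≠ last := Fin.ne_of_val_ne (by simp [last]; omega)
    rw [← hwv i]
    exact updateRow_ne this

theorem apply_eq_zero_of_mem_span {ι κ : Type*} {u : ι → κ → F} {k : κ} (hu : ∀ i, u i k = 0)
    {v : κ → F} (hv : v ∈ Submodule.span F (Set.range u)) : v k = 0 := by
  suffices Submodule.span F (Set.range u) ≤ LinearMap.ker (LinearMap.proj k) from this hv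
  rw [Submodule.span_le]
  rintro _ ⟨i, rfl⟩
  exact hu i

end LinearAlgebra

section Rows

variable {F : Type*} [Field F] {n r : ℕ}

theorem vecMul_apply_eq_zero_of_mem_span_rows {M N : Matrix (Fin n) (Fin n) F} (hMN : M * N = 1)
    (hr : r ≤ n) {x : Fin n → F}
    (hx : x ∈ Submodule.span F (Set.range fun i : Fin r => M (Fin.castLE hr i)))
    {t : Fin n} (ht : r ≤ (t : ℕ)) : (x ᵥ* N) t = 0 := by
  suffices Submodule.span F (Set.range fun i : Fin r => M (Fin.castLE hr i)) ≤
      LinearMap.ker ((LinearMap.proj t).comp (vecMulLinear N)) from this hx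
  rw [Submodule.span_le]
  rintro _ ⟨i, rfl⟩
  have : Fin.castLE hr i ≠ t := Fin.ne_of_val_ne (by simp; omega)
  simp [← mul_apply_eq_vecMul, hMN, one_apply_ne this]

theorem mul_row_mem_span_rows {M N : Matrix (Fin n) (Fin n) F} (hr : r ≤ n) {s : Fin n}
    (hM : ∀ t : Fin n, r ≤ (t : ℕ) → M s t = 0) :
    (M * N) s ∈ Submodule.span F (Set.range fun i : Fin r => N (Fin.castLE hr i)) := by
  rw [mul_apply_eq_vecMul, vecMul_eq_sum]
  refine Submodule.sum_mem _ fun t _ => ?_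
  rcases lt_or_ge (t : ℕ) r with ht | ht
  · exact Submodule.smul_mem _ _ (Submodule.subset_span ⟨⟨t, ht⟩, rfl⟩)
  · simp [hM t ht]

end Rows

-- `SLn n` is an abbreviation, so `(g : Matrix _ _ ℝ)` elaborates to `Subtype.val`, which the
-- `SpecialLinearGroup.coe_*` lemmas do not match syntactically.
theorem SLn.val_mul {n : ℕ} (p q : SLn n) :
    ((p * q : SLn n) : Matrix (Fin n) (Fin n) ℝ) = (p : Matrix (Fin n) (Fin n) ℝ) * q :=
  rfl

theorem SLn.val_inv {n : ℕ} (g : SLn n) :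
    ((g⁻¹ : SLn n) : Matrix (Fin n) (Fin n) ℝ) = (g : Matrix (Fin n) (Fin n) ℝ)⁻¹ := by
  simp [inv_def]

theorem SLn.val_mul_val_inv {n : ℕ} (g : SLn n) :
    (g : Matrix (Fin n) (Fin n) ℝ) * ((g⁻¹ : SLn n) : Matrix (Fin n) (Fin n) ℝ) = 1 := by
  rw [← SLn.val_mul, mul_inv_cancel]
  rfl

theorem SLn.linearIndependent_rows {n : ℕ} (g : SLn n) :
    LinearIndependent ℝ fun i => (g : Matrix (Fin n) (Fin n) ℝ) i :=
  linearIndependent_rows_iff_isUnit.2 ((g : Matrix (Fin n) (Fin n) ℝ).isUnit_iff_isUnit_det.2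
    (by simp [g.2]))

theorem mem_Pblock_iff_blockTriangular {n j : ℕ} {g : SLn n} :
    g ∈ Pblock n j ↔
      (g : Matrix (Fin n) (Fin n) ℝ).BlockTriangular fun i => decide ((i : ℕ) < j) := by
  refine forall₂_congr fun s t => ?_
  by_cases hs : (s : ℕ) < j <;> by_cases ht : (t : ℕ) < j <;> simp [hs, ht]
  omega

theorem inv_mem_Pblock {n j : ℕ} {g : SLn n} (hg : g ∈ Pblock n j) : g⁻¹ ∈ Pblock n j := by
  rw [mem_Pblock_iff_blockTriangular] at hg ⊢
  have : Invertible (g : Matrix (Fin n) (Fin n) ℝ) := invertibleOfIsUnitDet _ (by simp [g.2])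
  rw [SLn.val_inv]
  exact blockTriangular_inv_of_blockTriangular hg

theorem mul_apply_eq_zero_of_mem_Pblock {n d r : ℕ} (hdr : d ≤ r) {p q : SLn n}
    (hp : p ∈ Pblock n d) (hq : q ∈ Pblock n r) {s t : Fin n} (hs : (s : ℕ) < d)
    (ht : r ≤ (t : ℕ)) : ((p * q : SLn n) : Matrix (Fin n) (Fin n) ℝ) s t = 0 := by
  rw [SLn.val_mul, mul_apply]
  refine Finset.sum_eq_zero fun u _ => ?_
  rcases lt_or_ge (u : ℕ) d with hu | hu
  · rw [hq u t (by omega) ht, mul_zero]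
  · rw [hp s u hs hu, zero_mul]

theorem exists_Pblock_mul_Pblock_iff {n d r : ℕ} (hdr : d ≤ r) (hrn : r < n) (g : SLn n) :
    (∃ p ∈ Pblock n d, ∃ q ∈ Pblock n r, g = p * q) ↔
      ∀ s t : Fin n, (s : ℕ) < d → r ≤ (t : ℕ) → (g : Matrix (Fin n) (Fin n) ℝ) s t = 0 := by
  refine ⟨?_, fun hg => ?_⟩
  · rintro ⟨p, hp, q, hq, rfl⟩ s t hs ht
    exact mul_apply_eq_zero_of_mem_Pblock hdr hp hq hs ht
  -- Take `M ∈ SL_n(ℝ)` whose first `d` rows are `e_0, …, e_{d-1}` and whose first `r` rows span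
  -- `V = span(first r rows of g⁻¹)`; then `M ∈ P_d` and `M g ∈ P_r`.
  set V := Submodule.span ℝ
    (Set.range fun i : Fin r => ((g⁻¹ : SLn n) : Matrix (Fin n) (Fin n) ℝ) (Fin.castLE hrn.le i))
  have hV : Module.finrank ℝ V = r :=
    (finrank_span_eq_card ((SLn.linearIndependent_rows g⁻¹).comp _
      (Fin.castLE_injective hrn.le))).trans (Fintype.card_fin r)
  have he : ∀ s : Fin d, Pi.basisFun ℝ (Fin n) (Fin.castLE (hdr.trans hrn.le) s) ∈ V := by
    intro s
    rw [Pi.basisFun_apply]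
    have := mul_row_mem_span_rows (N := ((g⁻¹ : SLn n) : Matrix (Fin n) (Fin n) ℝ)) hrn.le
      (s := Fin.castLE (hdr.trans hrn.le) s) fun t ht => hg _ t (by simp) ht
    rwa [SLn.val_mul_val_inv, show (1 : Matrix (Fin n) (Fin n) ℝ) _ = Pi.single _ 1 from
      funext fun _ => one_eq_pi_single] at this
  obtain ⟨v, hv, hvV, hve⟩ := exists_linearIndependent_extension_fin (t := V) hdr
    (by rw [Submodule.span_eq, hV])
    ((Pi.basisFun ℝ (Fin n)).linearIndependent.comp _ (Fin.castLE_injective _)) he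
  obtain ⟨M, -, hM⟩ := exists_specialLinearGroup_rows_eq ⊤ hrn hv fun _ _ => trivial
  have hMv : ∀ (s : Fin n) (hs : (s : ℕ) < r), (M : Matrix (Fin n) (Fin n) ℝ) s = v ⟨s, hs⟩ :=
    fun s hs => hM ⟨s, hs⟩
  have hMd : M ∈ Pblock n d := fun s t hs ht => by
    rw [hMv s (by omega), show v ⟨s, _⟩ = v (Fin.castLE hdr ⟨s, hs⟩) from rfl, hve,
      Function.comp_apply, Pi.basisFun_apply]
    exact Pi.single_eq_of_ne (Fin.ne_of_val_ne (by simp; omega)) 1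
  have hMg : M * g ∈ Pblock n r := fun s t hs ht => by
    rw [SLn.val_mul, mul_apply_eq_vecMul, hMv s hs]
    exact vecMul_apply_eq_zero_of_mem_span_rows (by simpa using SLn.val_mul_val_inv g⁻¹) hrn.le
      (hvV _) ht
  exact ⟨M⁻¹, inv_mem_Pblock hMd, M * g, hMg, by group⟩

theorem exists_Pblock_mul_Pblock_mul_rational_iff {n d r : ℕ} (hdr : d ≤ r) (hrn : r < n)
    (K : Subfield ℝ) (g : SLn n) :
    (∃ pd ∈ Pblock n d, ∃ pr ∈ Pblock n r, ∃ h : SLn n,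
        (∀ i j : Fin n, (h : Matrix (Fin n) (Fin n) ℝ) i j ∈ K) ∧ g = pd * pr * h) ↔
      ∃ u : Fin r → Fin n → ℝ, LinearIndependent ℝ u ∧ (∀ i j, u i j ∈ K) ∧
        ∀ s : Fin n, (s : ℕ) < d →
          (g : Matrix (Fin n) (Fin n) ℝ) s ∈ Submodule.span ℝ (Set.range u) := by
  constructor
  · rintro ⟨pd, hpd, pr, hpr, h, hK, rfl⟩
    refine ⟨fun i => (h : Matrix (Fin n) (Fin n) ℝ) (Fin.castLE hrn.le i),
      (SLn.linearIndependent_rows h).comp _ (Fin.castLE_injective _), fun i j => hK _ _,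
      fun s hs => ?_⟩
    rw [SLn.val_mul]
    exact mul_row_mem_span_rows hrn.le fun t ht => mul_apply_eq_zero_of_mem_Pblock hdr hpd hpr hs ht
  · rintro ⟨u, hu, huK, hgu⟩
    obtain ⟨h, hK, hhu⟩ := exists_specialLinearGroup_rows_eq K hrn hu huK
    obtain ⟨pd, hpd, pr, hpr, hg⟩ :=
      (exists_Pblock_mul_Pblock_iff hdr hrn (g * h⁻¹)).2 fun s t hs ht => by
        rw [SLn.val_mul, mul_apply_eq_vecMul]
        refine vecMul_apply_eq_zero_of_mem_span_rows (SLn.val_mul_val_inv h) hrn.le ?_ ht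
        rw [funext hhu]
        exact hgu s hs
    exact ⟨pd, hpd, pr, hpr, h, hK, by rw [← hg]; group⟩

theorem gA_apply {n d : ℕ} (A : Matrix (Fin d) (Fin (n - d)) ℝ) (i j : Fin n) :
    (gA n d A : Matrix (Fin n) (Fin n) ℝ) i j =
      if i = j then 1
      else if hij : (i : ℕ) < d ∧ d ≤ (j : ℕ) then
        A ⟨i, hij.1⟩ ⟨(j : ℕ) - d, by have := j.isLt; omega⟩
      else 0 :=
  rfl

theorem vecMul_gA_submatrix_apply {n d : ℕ} (hdn : d ≤ n) (A : Matrix (Fin d) (Fin (n - d)) ℝ)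
    (c : Fin d → ℝ) (t : Fin n) :
    (c ᵥ* (gA n d A : Matrix (Fin n) (Fin n) ℝ).submatrix (Fin.castLE hdn) id) t =
      if ht : (t : ℕ) < d then c ⟨t, ht⟩
      else ∑ s : Fin d, c s * A s ⟨(t : ℕ) - d, by have := t.isLt; omega⟩ := by
  simp only [vecMul, dotProduct, submatrix_apply, id, gA_apply]
  split_ifs with ht
  · rw [Finset.sum_eq_single ⟨t, ht⟩]
    · simp
    · intro s _ hs
      have : Fin.castLE hdn s ≠ t := fun h => hs (Fin.ext (by simpa [Fin.ext_iff] using h))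
      simp [this, ht]
    · simp
  · refine Finset.sum_congr rfl fun s _ => ?_
    have : Fin.castLE hdn s ≠ t := Fin.ne_of_val_ne (by simp; omega)
    simp [this, not_lt.1 ht]

theorem tildeVec_zero {d : ℕ} (hd : 0 < d) : tildeVec d 0 = Pi.single ⟨0, hd⟩ 1 := by
  funext i
  simp [tildeVec, Pi.single_apply, Fin.ext_iff]

theorem tildeVec_single_sub_tildeVec_zero {d : ℕ} {s : Fin d} (hs : (s : ℕ) ≠ 0) :
    tildeVec d (Pi.single ⟨s - 1, by omega⟩ 1) - tildeVec d 0 = Pi.single s 1 := by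
  funext i
  by_cases hi : (i : ℕ) = 0
  · simp [tildeVec, hi, Pi.single_apply, Fin.ext_iff]
    omega
  · simp [tildeVec, hi, Pi.single_apply, Fin.ext_iff,
      show (i : ℕ) - 1 = s - 1 ↔ (i : ℕ) = s by omega]

def LAPoint (n d : ℕ) (A : Matrix (Fin d) (Fin (n - d)) ℝ) (x : Fin (d - 1) → ℝ) :
    Fin (n - 1) → ℝ :=
  fun j => if h : (j : ℕ) < d - 1 then x ⟨j, h⟩
    else ∑ i : Fin d, tildeVec d x i * A i ⟨(j : ℕ) - (d - 1), by have := j.isLt; omega⟩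

theorem mem_LAset_iff {n d : ℕ} {hd : 2 ≤ d} {hdn : d ≤ n - 1}
    {A : Matrix (Fin d) (Fin (n - d)) ℝ} {y : Fin (n - 1) → ℝ} :
    y ∈ LAset n d hd hdn A ↔ ∃ x, y = LAPoint n d A x :=
  Iff.rfl

theorem cons_one_LAPoint {N d : ℕ} (hd : 0 < d) (hdN : d ≤ N + 1)
    (A : Matrix (Fin d) (Fin (N + 1 - d)) ℝ) (x : Fin (d - 1) → ℝ) :
    (Fin.cons 1 (LAPoint (N + 1) d A x) : Fin (N + 1) → ℝ) =
      tildeVec d x ᵥ* (gA (N + 1) d A : Matrix (Fin (N + 1)) (Fin (N + 1)) ℝ).submatrix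
        (Fin.castLE hdN) id := by
  funext t
  rw [vecMul_gA_submatrix_apply]
  refine Fin.cases ?_ (fun k => ?_) t
  · simp [tildeVec, hd]
  · by_cases hk : (k : ℕ) < d - 1
    · simp [LAPoint, tildeVec, hk, show (k : ℕ) + 1 < d by omega]
    · simp [LAPoint, hk, show ¬ (k : ℕ) + 1 < d by omega,
        show (k : ℕ) + 1 - d = k - (d - 1) by omega]

theorem forall_LAset_cons_one_mem_iff {N d : ℕ} (hd : 2 ≤ d) (hdn : d ≤ N + 1 - 1)
    {A : Matrix (Fin d) (Fin (N + 1 - d)) ℝ} (S : Submodule ℝ (Fin (N + 1) → ℝ)) :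
    (∀ y ∈ LAset (N + 1) d hd hdn A, (Fin.cons 1 y : Fin (N + 1) → ℝ) ∈ S) ↔
      ∀ s : Fin (N + 1), (s : ℕ) < d →
        (gA (N + 1) d A : Matrix (Fin (N + 1)) (Fin (N + 1)) ℝ) s ∈ S := by
  have hdN : d ≤ N + 1 := by omega
  set R := (gA (N + 1) d A : Matrix (Fin (N + 1)) (Fin (N + 1)) ℝ).submatrix (Fin.castLE hdN) id
  constructor
  · intro hL s hs
    have hx : ∀ x, tildeVec d x ᵥ* R ∈ S := fun x => by
      simpa only [cons_one_LAPoint (by omega) hdN] using hL _ (mem_LAset_iff.2 ⟨x, rfl⟩)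
    obtain ⟨s, rfl⟩ : ∃ s' : Fin d, Fin.castLE hdN s' = s := ⟨⟨s, hs⟩, rfl⟩
    rw [show (gA (N + 1) d A : Matrix (Fin (N + 1)) (Fin (N + 1)) ℝ) (Fin.castLE hdN s) =
      Pi.single s 1 ᵥ* R by rw [single_one_vecMul]; rfl]
    by_cases h0 : (s : ℕ) = 0
    · simpa [tildeVec_zero (by omega : 0 < d), show (⟨0, _⟩ : Fin d) = s from Fin.ext h0.symm]
        using hx 0
    · rw [← tildeVec_single_sub_tildeVec_zero h0, sub_vecMul]
      exact S.sub_mem (hx _) (hx _)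
  · intro hrows y hy
    obtain ⟨x, rfl⟩ := mem_LAset_iff.1 hy
    rw [cons_one_LAPoint (by omega) hdN, vecMul_eq_sum]
    exact S.sum_mem fun s _ => S.smul_mem _ (hrows _ (by simp))

section AffineFrame

variable {N m : ℕ}

def affineFrameLift (p : Fin N → ℝ) (w : Fin m → Fin N → ℝ) : Fin (m + 1) → Fin (N + 1) → ℝ :=
  Fin.cons (Fin.cons 1 p) fun j => Fin.cons 0 (w j)

theorem affineFrameLift_mem_subfield_iff (K : Subfield ℝ) {p : Fin N → ℝ}
    {w : Fin m → Fin N → ℝ} :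
    (∀ i j, affineFrameLift p w i j ∈ K) ↔ (∀ j, p j ∈ K) ∧ ∀ i j, w i j ∈ K := by
  simp [affineFrameLift, Fin.forall_fin_succ, K.one_mem, K.zero_mem]

theorem linearIndependent_affineFrameLift_iff {p : Fin N → ℝ} {w : Fin m → Fin N → ℝ} :
    LinearIndependent ℝ (affineFrameLift p w) ↔ LinearIndependent ℝ w := by
  let consZero : (Fin N → ℝ) →ₗ[ℝ] Fin (N + 1) → ℝ := LinearMap.vecCons 0 LinearMap.id
  have hinj : Function.Injective consZero := fun y z h => by
    simpa [consZero, Matrix.vecCons] using congrArg Fin.tail h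
  rw [affineFrameLift, linearIndependent_finCons,
    show (fun j => Fin.cons 0 (w j) : Fin m → Fin (N + 1) → ℝ) = consZero ∘ w from rfl,
    consZero.linearIndependent_iff_of_injOn hinj.injOn, and_iff_left_iff_imp]
  intro _ hmem
  simpa using apply_eq_zero_of_mem_span (k := 0) (fun j => rfl) hmem

theorem sum_smul_affineFrameLift (p : Fin N → ℝ) (w : Fin m → Fin N → ℝ) (c : Fin (m + 1) → ℝ) :
    ∑ i, c i • affineFrameLift p w i = Fin.cons (c 0) (c 0 • p + ∑ j, c j.succ • w j) := by
  funext t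
  refine Fin.cases ?_ (fun k => ?_) t <;>
    simp [affineFrameLift, Fin.sum_univ_succ, Finset.sum_apply]

theorem cons_one_mem_span_affineFrameLift_iff {p : Fin N → ℝ} {w : Fin m → Fin N → ℝ}
    {y : Fin N → ℝ} :
    (Fin.cons 1 y : Fin (N + 1) → ℝ) ∈ Submodule.span ℝ (Set.range (affineFrameLift p w)) ↔
      ∃ c : Fin m → ℝ, y = p + ∑ i, c i • w i := by
  simp_rw [Submodule.mem_span_range_iff_exists_fun, sum_smul_affineFrameLift, Fin.cons_inj]
  constructor
  · rintro ⟨c, hc0, hc⟩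
    exact ⟨fun j => c j.succ, by simpa [hc0] using hc.symm⟩
  · rintro ⟨c, rfl⟩
    exact ⟨Fin.cons 1 c, by simp⟩

end AffineFrame

theorem exists_rational_affineFrameLift_span_eq {N m : ℕ} (K : Subfield ℝ)
    {u : Fin (m + 1) → Fin (N + 1) → ℝ} (hu : LinearIndependent ℝ u) (huK : ∀ i j, u i j ∈ K)
    {v : Fin (N + 1) → ℝ} (hv : v ∈ Submodule.span ℝ (Set.range u)) (hv0 : v 0 ≠ 0) :
    ∃ (p : Fin N → ℝ) (w : Fin m → Fin N → ℝ), (∀ j, p j ∈ K) ∧ (∀ i j, w i j ∈ K) ∧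
      LinearIndependent ℝ w ∧
      Submodule.span ℝ (Set.range (affineFrameLift p w)) = Submodule.span ℝ (Set.range u) := by
  obtain ⟨i₀, hi₀⟩ : ∃ i, u i 0 ≠ 0 := by
    by_contra! h
    exact hv0 (apply_eq_zero_of_mem_span h hv)
  -- Gaussian elimination on the first coordinate, pivoting on `u i₀`.
  set P := (u i₀ 0)⁻¹ • u i₀
  set W : Fin m → Fin (N + 1) → ℝ := fun j => u (i₀.succAbove j) - u (i₀.succAbove j) 0 • P
  have hP0 : P 0 = 1 := by simp [P, hi₀]
  have hPK : ∀ k, P k ∈ K := fun k => K.mul_mem (K.inv_mem (huK _ _)) (huK _ _)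
  have hframe : affineFrameLift (Fin.tail P) (fun j => Fin.tail (W j)) = Fin.cons P W := by
    have hW0 : ∀ j, W j 0 = 0 := by simp [W, hP0]
    unfold affineFrameLift
    congr 1
    · rw [← hP0, Fin.cons_self_tail]
    · exact funext fun j => by rw [← hW0 j, Fin.cons_self_tail]
  have hspan : Submodule.span ℝ (Set.range (Fin.cons P W)) = Submodule.span ℝ (Set.range u) := by
    apply le_antisymm <;> rw [Submodule.span_le]
    · rintro _ ⟨i, rfl⟩
      refine Fin.cases ?_ (fun j => ?_) i
      · exact Submodule.smul_mem _ _ (Submodule.subset_span ⟨i₀, rfl⟩)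
      · exact Submodule.sub_mem _ (Submodule.subset_span ⟨_, rfl⟩)
          (Submodule.smul_mem _ _ (Submodule.smul_mem _ _ (Submodule.subset_span ⟨i₀, rfl⟩)))
    · have hPmem : P ∈ Submodule.span ℝ (Set.range (Fin.cons P W)) :=
        Submodule.subset_span ⟨0, Fin.cons_zero _ _⟩
      rintro _ ⟨i, rfl⟩
      refine Fin.succAboveCases i₀ ?_ (fun j => ?_) i
      · rw [show u i₀ = u i₀ 0 • P by simp [P, smul_smul, hi₀]]
        exact Submodule.smul_mem _ _ hPmem
      · rw [← sub_add_cancel (u (i₀.succAbove j)) (u (i₀.succAbove j) 0 • P)]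
        exact Submodule.add_mem _ (Submodule.subset_span ⟨j.succ, Fin.cons_succ _ _ _⟩)
          (Submodule.smul_mem _ _ hPmem)
  refine ⟨Fin.tail P, fun j => Fin.tail (W j), fun k => hPK _,
    fun j k => K.sub_mem (huK _ _) (K.mul_mem (huK _ _) (hPK _)), ?_, hframe ▸ hspan⟩
  rw [← linearIndependent_affineFrameLift_iff (p := Fin.tail P), hframe,
    linearIndependent_iff_card_eq_finrank_span, Set.finrank, hspan, finrank_span_eq_card hu]

theorem LAset_subset_rational_affine_iff_rows_mem_rational_span {N m d : ℕ} {hd : 2 ≤ d}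
    {hdn : d ≤ N + 1 - 1} {A : Matrix (Fin d) (Fin (N + 1 - d)) ℝ} (K : Subfield ℝ) :
    (∃ (p : Fin N → ℝ) (w : Fin m → Fin N → ℝ), (∀ j, p j ∈ K) ∧ (∀ i j, w i j ∈ K) ∧
        LinearIndependent ℝ w ∧
        LAset (N + 1) d hd hdn A ⊆ {y | ∃ c : Fin m → ℝ, y = p + ∑ i, c i • w i}) ↔
      ∃ u : Fin (m + 1) → Fin (N + 1) → ℝ, LinearIndependent ℝ u ∧ (∀ i j, u i j ∈ K) ∧
        ∀ s : Fin (N + 1), (s : ℕ) < d →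
          (gA (N + 1) d A : Matrix (Fin (N + 1)) (Fin (N + 1)) ℝ) s ∈
            Submodule.span ℝ (Set.range u) := by
  constructor
  · rintro ⟨p, w, hp, hw, hwli, hL⟩
    exact ⟨affineFrameLift p w, linearIndependent_affineFrameLift_iff.2 hwli,
      (affineFrameLift_mem_subfield_iff K).2 ⟨hp, hw⟩, (forall_LAset_cons_one_mem_iff hd hdn _).1
        fun y hy => cons_one_mem_span_affineFrameLift_iff.2 (hL hy)⟩
  · rintro ⟨u, hu, huK, hrows⟩
    have hL := (forall_LAset_cons_one_mem_iff hd hdn _).2 hrows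
    obtain ⟨p, w, hp, hw, hwli, hspan⟩ := exists_rational_affineFrameLift_span_eq K hu huK
      (hL _ (mem_LAset_iff.2 ⟨0, rfl⟩)) (by simp)
    exact ⟨p, w, hp, hw, hwli, fun y hy =>
      cons_one_mem_span_affineFrameLift_iff.1 (hspan ▸ hL y hy)⟩

theorem interpretation_of_K_rational_subspace_general
    (n d r : ℕ) (hd : 2 ≤ d) (hdn : d ≤ n - 1)
    (hdr : d ≤ r) (hrn : r ≤ n - 1)
    (K : Subfield ℝ)
    (A : Matrix (Fin d) (Fin (n - d)) ℝ) :
    (∃ (p : Fin (n - 1) → ℝ) (w : Fin (r - 1) → (Fin (n - 1) → ℝ)),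
        (∀ j, p j ∈ K) ∧ (∀ i j, w i j ∈ K) ∧ LinearIndependent ℝ w ∧
        LAset n d hd hdn A ⊆ {y | ∃ c : Fin (r - 1) → ℝ, y = p + ∑ i, c i • w i}) ↔
      (∃ pd ∈ Pblock n d, ∃ pr ∈ Pblock n r, ∃ hK : SLn n,
        (∀ i j : Fin n, (hK : Matrix (Fin n) (Fin n) ℝ) i j ∈ K) ∧
        gA n d A = pd * pr * hK) := by
  obtain ⟨N, rfl⟩ : ∃ N, n = N + 1 := ⟨n - 1, by omega⟩
  obtain ⟨m, rfl⟩ : ∃ m, r = m + 1 := ⟨r - 1, by omega⟩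
  exact (LAset_subset_rational_affine_iff_rows_mem_rational_span K).trans
    (exists_Pblock_mul_Pblock_mul_rational_iff hdr (by omega) K _).symm

/-- **Lemma (interpretation of the arithmetic condition).** -/
theorem interpretation_of_K_rational_subspace
    (n d r : ℕ) (hn : 3 ≤ n) (hd : 2 ≤ d) (hdn : d ≤ n - 1)
    (hdr : d ≤ r) (hrn : r ≤ n - 1)
    (K : Subfield ℝ)
    (A : Matrix (Fin d) (Fin (n - d)) ℝ) :
    (∃ (p : Fin (n - 1) → ℝ) (w : Fin (r - 1) → (Fin (n - 1) → ℝ)),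
        (∀ j, p j ∈ K) ∧ (∀ i j, w i j ∈ K) ∧ LinearIndependent ℝ w ∧
        LAset n d hd hdn A ⊆ {y | ∃ c : Fin (r - 1) → ℝ, y = p + ∑ i, c i • w i}) ↔
      (∃ pd ∈ Pblock n d, ∃ pr ∈ Pblock n r, ∃ hK : SLn n,
        (∀ i j : Fin n, (hK : Matrix (Fin n) (Fin n) ℝ) i j ∈ K) ∧
        gA n d A = pd * pr * hK) :=
  interpretation_of_K_rational_subspace_general n d r hd hdn hdr hrn K A
end
end
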